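/- arXiv:1707.08794 — 4 statements merged into one kernel-verified Lean document; each statement's English description precedes it below -/
import Mathlib

section
/- Let r ∈ (1/4, 1/2), δ = r - 1/4, k_0 = ⌊1/δ⌋, and let X = {kδ·(1,...,1) : k ∈ {1,...,k_0}} ∪ {(1/2,...,1/2)} ⊆ [0,1]^d. Then every open axis-parallel box B ⊆ [0,1]^d with B ∩ X = ∅ has volume at most r. -/
/-- For r ∈ (1/4,1/2), δ = r - 1/4, k₀ = ⌊1/δ⌋, the diagonal point set
X = {kδ·𝟏 : k ∈ [k₀]} ∪ {(1/2)·𝟏} has dispersion at most r: every open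
axis-parallel box in [0,1]^d disjoint from X has volume at most r. -/
theorem diagonal_point_set_dispersion (d : ℕ) (hd : 2 ≤ d) (r : ℝ)
    (hr : r ∈ Set.Ioo (1/4 : ℝ) (1/2)) (δ : ℝ) (hδ : δ = r - 1/4)
    (k₀ : ℕ) (hk₀ : k₀ = ⌊1/δ⌋₊) (X : Set (Fin d → ℝ))
    (hX : X = {x | ∃ k : ℕ, 1 ≤ k ∧ k ≤ k₀ ∧ x = fun _ => (k : ℝ) * δ} ∪
      {fun _ => (1/2 : ℝ)})
    (a b : Fin d → ℝ) (hab : ∀ i, 0 ≤ a i ∧ a i ≤ b i ∧ b i ≤ 1)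
    (hdisj : ∀ x ∈ X, ¬ (∀ i, x i ∈ Set.Ioo (a i) (b i))) :
    ∏ i, (b i - a i) ≤ r := by
  obtain ⟨hr1, hr2⟩ := hr
  have hδ0 : 0 < δ := by rw [hδ]; linarith
  have hδ4 : δ < 1/4 := by rw [hδ]; linarith
  have hne : (Finset.univ : Finset (Fin d)).Nonempty :=
    ⟨⟨0, by omega⟩, Finset.mem_univ _⟩
  obtain ⟨i₀, -, hi₀⟩ := Finset.exists_min_image Finset.univ b hne
  obtain ⟨j₀, -, hj₀⟩ := Finset.exists_max_image Finset.univ a hne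
  have haj0 : 0 ≤ a j₀ := (hab j₀).1
  -- Gap lemma: min b ≤ max a + δ
  have hgap : b i₀ ≤ a j₀ + δ := by
    by_contra h
    push_neg at h
    set k : ℕ := ⌊a j₀ / δ⌋₊ + 1 with hk
    have hfl := Nat.lt_floor_add_one (a j₀ / δ)
    have hk1 : a j₀ < (k : ℝ) * δ := by
      have : a j₀ = (a j₀ / δ) * δ := by field_simp
      rw [this]
      push_cast [hk]
      exact mul_lt_mul_of_pos_right hfl hδ0
    have hk2 : (k : ℝ) * δ ≤ a j₀ + δ := by
      have hle := Nat.floor_le (div_nonneg haj0 hδ0.le)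
      have : (⌊a j₀ / δ⌋₊ : ℝ) * δ ≤ a j₀ := by
        have h2 := mul_le_mul_of_nonneg_right hle hδ0.le
        rwa [div_mul_cancel₀ _ hδ0.ne'] at h2
      push_cast [hk]
      linarith
    have hkb : (k : ℝ) * δ < b i₀ := lt_of_le_of_lt hk2 h
    have hkk₀ : k ≤ k₀ := by
      rw [hk₀]
      apply Nat.le_floor
      rw [le_div_iff₀ hδ0]
      have h1 : (k : ℝ) * δ < 1 := lt_of_lt_of_le hkb (hab i₀).2.2
      linarith
    refine hdisj (fun _ => (k : ℝ) * δ)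
      (by rw [hX]; left; exact ⟨k, Nat.le_add_left 1 _, hkk₀, rfl⟩) ?_
    intro i
    exact ⟨lt_of_le_of_lt (hj₀ i (Finset.mem_univ i)) hk1,
           lt_of_lt_of_le hkb (hi₀ i (Finset.mem_univ i))⟩
  -- Product over any subset dominates the full product
  have hprod : ∀ s : Finset (Fin d),
      ∏ i, (b i - a i) ≤ ∏ i ∈ s, (b i - a i) := by
    intro s
    rw [← Finset.prod_compl_mul_prod s]
    have h1 : ∏ i ∈ sᶜ, (b i - a i) ≤ 1 :=
      Finset.prod_le_one (fun i _ => by linarith [(hab i).2.1])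
        (fun i _ => by linarith [(hab i).1, (hab i).2.2])
    have h2 : 0 ≤ ∏ i ∈ s, (b i - a i) :=
      Finset.prod_nonneg (fun i _ => by linarith [(hab i).2.1])
    nlinarith [Finset.prod_nonneg (fun i (_ : i ∈ sᶜ) => by linarith [(hab i).2.1] :
      ∀ i ∈ sᶜ, (0:ℝ) ≤ b i - a i)]
  by_cases hij : i₀ = j₀
  · have h1 : ∏ i, (b i - a i) ≤ b i₀ - a i₀ := by
      simpa using hprod {i₀}
    rw [hij] at h1 hgap
    linarith
  · have h1 : ∏ i, (b i - a i) ≤ (b i₀ - a i₀) * (b j₀ - a j₀) := by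
      have := hprod {i₀, j₀}
      rwa [Finset.prod_pair hij] at this
    have hai0 : 0 ≤ a i₀ := (hab i₀).1
    have hbi0 : a i₀ ≤ b i₀ := (hab i₀).2.1
    have hbj0 : b j₀ ≤ 1 := (hab j₀).2.2
    have haj1 : a j₀ ≤ b j₀ := (hab j₀).2.1
    nlinarith [sq_nonneg (2 * a j₀ - 1 + δ), sq_nonneg (a j₀ + δ)]
end

section
/- For every r ∈ (1/4, 1) and every d ≥ 2, there exists a set X ⊆ [0,1]^d of at most ⌊1/(r - 1/4)⌋ + 1 points such that every open axis-parallel box in [0,1]^d of volume greater than r contains a point of X. -/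
set_option maxHeartbeats 1000000 in
/-- For r ∈ (1/4,1) and d ≥ 2, there is a set of at most ⌊1/(r-1/4)⌋ + 1 points
in [0,1]^d meeting every open axis-parallel box of volume greater than r. -/
theorem bounded_points_suffice_large_r (d : ℕ) (hd : 2 ≤ d) (r : ℝ)
    (hr : r ∈ Set.Ioo (1/4 : ℝ) 1) :
    ∃ X : Finset (Fin d → ℝ), X.card ≤ ⌊1/(r - 1/4)⌋₊ + 1 ∧
      (∀ x ∈ X, ∀ i, x i ∈ Set.Icc (0:ℝ) 1) ∧
      ∀ a b : Fin d → ℝ, (∀ i, 0 ≤ a i ∧ a i ≤ b i ∧ b i ≤ 1) →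
        r < ∏ i, (b i - a i) → ∃ x ∈ X, ∀ i, x i ∈ Set.Ioo (a i) (b i) := by
  obtain ⟨hr1, hr2⟩ := hr
  have hrq : (0:ℝ) < r - 1/4 := by linarith
  obtain ⟨m, hm⟩ : ∃ m : ℕ, m = ⌊1/(r - 1/4)⌋₊ + 1 := ⟨_, rfl⟩
  obtain ⟨s, hs⟩ : ∃ s : ℝ, s = 1/((m:ℝ)+1) := ⟨_, rfl⟩
  have hmpos : (0:ℝ) < (m:ℝ)+1 := by positivity
  have hs_pos : 0 < s := by rw [hs]; positivity
  have hx : 1/(r-1/4) < (m:ℝ)+1 := by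
    have h := Nat.lt_floor_add_one (1/(r-1/4))
    have : (⌊1/(r - 1/4)⌋₊ : ℝ) + 1 ≤ (m:ℝ) := by rw [hm]; push_cast; linarith
    linarith
  have hs_lt : s < r - 1/4 := by
    rw [hs, div_lt_iff₀ hmpos]
    have := (div_lt_iff₀ hrq).mp hx
    nlinarith
  refine ⟨(Finset.Icc 1 m).image (fun k : ℕ => fun _ : Fin d => (k:ℝ) * s), ?_, ?_, ?_⟩
  · calc _ ≤ (Finset.Icc 1 m).card := Finset.card_image_le
      _ = m := by rw [Nat.card_Icc]; omega
      _ ≤ ⌊1/(r - 1/4)⌋₊ + 1 := hm.le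
  · intro x hxm i
    simp only [Finset.mem_image, Finset.mem_Icc] at hxm
    obtain ⟨k, ⟨hk1, hk2⟩, rfl⟩ := hxm
    show (k:ℝ) * s ∈ Set.Icc (0:ℝ) 1
    have hk2' : (k:ℝ) ≤ (m:ℝ) := by exact_mod_cast hk2
    have h1 : (k:ℝ) * s ≤ (m:ℝ) * s := by nlinarith
    have hms : (m:ℝ) * s < 1 := by
      rw [hs, mul_one_div, div_lt_one hmpos]; linarith
    exact ⟨by positivity, by linarith⟩
  · intro a b hab hvol
    have hne : Nonempty (Fin d) := ⟨⟨0, by omega⟩⟩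
    have hune : (Finset.univ : Finset (Fin d)).Nonempty := Finset.univ_nonempty
    obtain ⟨i0, -, hi0⟩ := Finset.exists_mem_eq_sup' hune a
    obtain ⟨j0, -, hj0⟩ := Finset.exists_mem_eq_inf' hune b
    have hA : ∀ i, a i ≤ a i0 := fun i => hi0 ▸ Finset.le_sup' a (Finset.mem_univ i)
    have hB : ∀ i, b j0 ≤ b i := fun i => hj0 ▸ Finset.inf'_le b (Finset.mem_univ i)
    have hl_pos : ∀ i, 0 < b i - a i := by
      intro i
      rcases lt_or_eq_of_le (sub_nonneg.mpr (hab i).2.1) with h | h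
      · exact h
      · exfalso
        have : ∏ i, (b i - a i) = 0 := Finset.prod_eq_zero (Finset.mem_univ i) h.symm
        rw [this] at hvol; linarith
    have hl_le : ∀ i, b i - a i ≤ 1 := fun i => by
      have := (hab i).1; have := (hab i).2.2; linarith
    -- gap bound: b j0 - a i0 > r - 1/4
    have hgap : r - 1/4 < b j0 - a i0 := by
      rcases eq_or_ne i0 j0 with h | h
      · -- gap equals the single length, which exceeds r
        subst h
        have h1 : ∏ i, (b i - a i) =
            (b i0 - a i0) * ∏ i ∈ Finset.univ.erase i0, (b i - a i) :=
          (Finset.mul_prod_erase _ _ (Finset.mem_univ i0)).symm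
        have h2 : ∏ i ∈ Finset.univ.erase i0, (b i - a i) ≤ 1 :=
          Finset.prod_le_one (fun i _ => (hl_pos i).le) (fun i _ => hl_le i)
        have h4 : 0 < ∏ i ∈ Finset.univ.erase i0, (b i - a i) :=
          Finset.prod_pos (fun i _ => hl_pos i)
        nlinarith [hl_pos i0]
      · have h1 : ∏ i, (b i - a i) =
            (b i0 - a i0) * ∏ i ∈ Finset.univ.erase i0, (b i - a i) :=
          (Finset.mul_prod_erase _ _ (Finset.mem_univ i0)).symm
        have hj0' : j0 ∈ Finset.univ.erase i0 :=
          Finset.mem_erase.mpr ⟨h.symm, Finset.mem_univ j0⟩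
        have h2 : ∏ i ∈ Finset.univ.erase i0, (b i - a i) =
            (b j0 - a j0) * ∏ i ∈ (Finset.univ.erase i0).erase j0, (b i - a i) :=
          (Finset.mul_prod_erase _ _ hj0').symm
        have h3 : ∏ i ∈ (Finset.univ.erase i0).erase j0, (b i - a i) ≤ 1 :=
          Finset.prod_le_one (fun i _ => (hl_pos i).le) (fun i _ => hl_le i)
        have h4 : 0 < ∏ i ∈ (Finset.univ.erase i0).erase j0, (b i - a i) :=
          Finset.prod_pos (fun i _ => hl_pos i)
        have hkey : r < (b i0 - a i0) * (b j0 - a j0) := by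
          nlinarith [hl_pos i0, hl_pos j0]
        have hsum : r + 3/4 < (b i0 - a i0) + (b j0 - a j0) := by
          nlinarith [sq_nonneg ((b i0 - a i0) - (b j0 - a j0)),
            mul_pos hrq (show (0:ℝ) < 9/4 - r by linarith), hl_le i0, hl_le j0,
            hl_pos i0, hl_pos j0]
        have h5 : a i0 ≤ 1 - (b i0 - a i0) := by have := (hab i0).2.2; linarith
        have h6 : (b j0 - a j0) ≤ b j0 := by have := (hab j0).1; linarith
        linarith
    have hα0 : 0 ≤ a i0 := (hab i0).1
    have hβ1 : b j0 ≤ 1 := (hab j0).2.2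
    -- choose the grid point k with a i0 < k*s < b j0
    have hk := Nat.lt_floor_add_one (a i0 / s)
    have hfl := Nat.floor_le (show 0 ≤ a i0 / s from div_nonneg hα0 hs_pos.le)
    have hks_gt : a i0 < ((⌊a i0 / s⌋₊ : ℝ) + 1) * s := by
      have h' : (a i0 / s) * s = a i0 := div_mul_cancel₀ _ hs_pos.ne'
      have := mul_lt_mul_of_pos_right hk hs_pos
      linarith
    have hks_lt : ((⌊a i0 / s⌋₊ : ℝ) + 1) * s < b j0 := by
      have h' : (⌊a i0 / s⌋₊ : ℝ) * s ≤ a i0 := by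
        have h'' : (a i0 / s) * s = a i0 := div_mul_cancel₀ _ hs_pos.ne'
        have := mul_le_mul_of_nonneg_right hfl hs_pos.le
        linarith
      have hring : ((⌊a i0 / s⌋₊ : ℝ) + 1) * s = (⌊a i0 / s⌋₊ : ℝ) * s + s := by ring
      linarith
    have hkm : ⌊a i0 / s⌋₊ + 1 ≤ m := by
      by_contra hcon
      push_neg at hcon
      have : (m:ℝ) + 1 ≤ ((⌊a i0 / s⌋₊ : ℝ) + 1) := by exact_mod_cast hcon
      have h1 : ((m:ℝ)+1) * s ≤ ((⌊a i0 / s⌋₊ : ℝ) + 1) * s :=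
        mul_le_mul_of_nonneg_right this hs_pos.le
      have h2 : ((m:ℝ)+1) * s = 1 := by
        rw [hs, mul_one_div, div_self hmpos.ne']
      linarith
    refine ⟨fun _ => ((⌊a i0 / s⌋₊ : ℝ) + 1) * s, ?_, ?_⟩
    · refine Finset.mem_image.mpr ⟨⌊a i0 / s⌋₊ + 1,
        Finset.mem_Icc.mpr ⟨Nat.le_add_left 1 _, hkm⟩, ?_⟩
      push_cast
      rfl
    · intro i
      exact ⟨lt_of_le_of_lt (hA i) hks_gt, lt_of_lt_of_le hks_lt (hB i)⟩
end

section
/- Let q ≥ 2 be an integer, r = 1/q, d ≥ 2, and M = ⌊log r / log(1-r)⌋. For every open axis-parallel box B = I_1 × ... × I_d ⊆ [0,1]^d of volume greater than r, there exist indices 1 ≤ j_1 < ... < j_M ≤ d and values k_{j_1},...,k_{j_M} ∈ {1,...,q-1} such that |I_i| > (q-1)/q for all i ∉ {j_1,...,j_M}, and k_{j_ℓ}/q ∈ I_{j_ℓ} for all ℓ ∈ {1,...,M}. -/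
/-- For r = 1/q and M = ⌊log r / log(1-r)⌋ ≤ d, every open box of volume > r
admits indices j₁ < ... < j_M and values k ∈ {1,...,q-1} such that every
other side has length > (q-1)/q and k_{jℓ}/q lies in the jℓ-th interval. -/
theorem box_selector_indices (q d M : ℕ) (hq : 2 ≤ q) (hd : 2 ≤ d) (r : ℝ)
    (hr : r = 1/q) (hM : M = ⌊Real.log r / Real.log (1 - r)⌋₊) (hMd : M ≤ d)
    (a b : Fin d → ℝ) (hab : ∀ i, 0 ≤ a i ∧ a i ≤ b i ∧ b i ≤ 1)
    (hvol : r < ∏ i, (b i - a i)) :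
    ∃ j : Fin M → Fin d, StrictMono j ∧ ∃ k : Fin M → ℕ,
      (∀ ℓ, 1 ≤ k ℓ ∧ k ℓ ≤ q - 1) ∧
      (∀ i, i ∉ Set.range j → ((q:ℝ) - 1)/q < b i - a i) ∧
      (∀ ℓ, (k ℓ : ℝ)/q ∈ Set.Ioo (a (j ℓ)) (b (j ℓ))) := by
  have hq2 : (2:ℝ) ≤ q := by exact_mod_cast hq
  have hq0 : (0:ℝ) < q := by linarith
  have hr0 : 0 < r := by rw [hr]; positivity
  have hr1 : r < 1 := by
    rw [hr, div_lt_one hq0]; linarith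
  have hnn : ∀ i, 0 ≤ b i - a i := by
    intro i; have h := hab i; linarith [h.1, h.2.1]
  have hle1 : ∀ i, b i - a i ≤ 1 := by
    intro i; have h := hab i; linarith [h.1, h.2.2]
  have hqr : ((q:ℝ) - 1)/q = 1 - r := by
    rw [hr]; field_simp
  -- every side has length > r
  have hside : ∀ i, r < b i - a i := by
    intro i
    have h2 : ∏ j ∈ Finset.univ.erase i, (b j - a j) ≤ 1 :=
      Finset.prod_le_one (fun j _ => hnn j) (fun j _ => hle1 j)
    have h3 : ∏ j, (b j - a j) = (∏ j ∈ Finset.univ.erase i, (b j - a j)) * (b i - a i) :=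
      (Finset.prod_erase_mul Finset.univ _ (Finset.mem_univ i)).symm
    nlinarith [hnn i]
  -- (1-r)^(M+1) < r
  have h1r0 : (0:ℝ) < 1 - r := by linarith
  have h1r1 : (1:ℝ) - r < 1 := by linarith
  have hlog : Real.log (1 - r) < 0 := Real.log_neg h1r0 h1r1
  have hpow : (1 - r) ^ (M + 1) < r := by
    have hx : Real.log r / Real.log (1 - r) < (M : ℝ) + 1 := by
      rw [hM]
      push_cast
      exact Nat.lt_floor_add_one _
    have h4 : ((M:ℝ) + 1) * Real.log (1 - r) < Real.log r := by
      rw [div_lt_iff_of_neg hlog] at hx; linarith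
    have h5 : Real.log ((1 - r) ^ (M + 1)) < Real.log r := by
      rw [Real.log_pow]; push_cast; linarith
    have h6 : (0:ℝ) < (1 - r) ^ (M + 1) := by positivity
    calc (1 - r) ^ (M + 1) = Real.exp (Real.log ((1 - r) ^ (M + 1))) := (Real.exp_log h6).symm
      _ < Real.exp (Real.log r) := Real.exp_lt_exp.mpr h5
      _ = r := Real.exp_log hr0
  -- the set of short sides
  set S : Finset (Fin d) := Finset.univ.filter (fun i => b i - a i ≤ 1 - r) with hS
  have hcard : S.card ≤ M := by
    by_contra hc
    push_neg at hc
    have hprodS : ∏ i ∈ S, (b i - a i) ≤ (1 - r) ^ S.card := by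
      calc ∏ i ∈ S, (b i - a i) ≤ ∏ i ∈ S, (1 - r) := by
            apply Finset.prod_le_prod (fun i _ => hnn i)
            intro i hi
            exact (Finset.mem_filter.mp hi).2
        _ = (1 - r) ^ S.card := Finset.prod_const _
    have hprodSc : ∏ i ∈ Sᶜ, (b i - a i) ≤ 1 :=
      Finset.prod_le_one (fun i _ => hnn i) (fun i _ => hle1 i)
    have hsplit : (∏ i ∈ S, (b i - a i)) * ∏ i ∈ Sᶜ, (b i - a i) = ∏ i, (b i - a i) :=
      Finset.prod_mul_prod_compl S _
    have hprodS0 : 0 ≤ ∏ i ∈ S, (b i - a i) := Finset.prod_nonneg (fun i _ => hnn i)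
    have h7 : ∏ i, (b i - a i) ≤ (1 - r) ^ S.card := by
      nlinarith
    have h8 : (1 - r) ^ S.card ≤ (1 - r) ^ (M + 1) := by
      apply pow_le_pow_of_le_one (le_of_lt h1r0) (le_of_lt h1r1) hc
    linarith
  -- extend S to a set T of size M
  obtain ⟨T, hST, hTcard⟩ := Finset.exists_superset_card_eq hcard (by simpa using hMd)
  refine ⟨⇑(T.orderEmbOfFin hTcard), (T.orderEmbOfFin hTcard).strictMono, ?_⟩
  set j : Fin M → Fin d := ⇑(T.orderEmbOfFin hTcard) with hj
  -- define k
  refine ⟨fun ℓ => ⌊a (j ℓ) * q⌋₊ + 1, ?_, ?_, ?_⟩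
  · intro ℓ
    constructor
    · exact Nat.le_add_left 1 _
    · have ha0 : 0 ≤ a (j ℓ) := (hab _).1
      have hb1 : b (j ℓ) ≤ 1 := (hab _).2.2
      have hs := hside (j ℓ)
      have hflt : ⌊a (j ℓ) * q⌋₊ < q - 1 := by
        rw [Nat.floor_lt (by positivity)]
        have h9 : a (j ℓ) < 1 - r := by linarith
        have hcast : ((q - 1 : ℕ) : ℝ) = (q : ℝ) - 1 := by
          have h1q : (1:ℕ) ≤ q := by omega
          push_cast [h1q]; ring
        rw [hcast]
        have hrq : r * q = 1 := by rw [hr]; field_simp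
        nlinarith
      show ⌊a (j ℓ) * q⌋₊ + 1 ≤ q - 1
      omega
  · intro i hi
    rw [hj, Finset.range_orderEmbOfFin] at hi
    have hiS : i ∉ S := fun h => hi (hST h)
    rw [hS, Finset.mem_filter] at hiS
    push_neg at hiS
    rw [hqr]
    exact hiS (Finset.mem_univ i)
  · intro ℓ
    have ha0 : 0 ≤ a (j ℓ) := (hab _).1
    have hs := hside (j ℓ)
    constructor
    · rw [lt_div_iff₀ hq0]
      have := Nat.lt_floor_add_one (a (j ℓ) * q)
      push_cast
      linarith
    · rw [div_lt_iff₀ hq0]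
      have hfle : (⌊a (j ℓ) * q⌋₊ : ℝ) ≤ a (j ℓ) * q := Nat.floor_le (by positivity)
      have : r * q = 1 := by rw [hr]; field_simp
      push_cast
      nlinarith
end

section
/- Define N(r,d) as the minimum cardinality of a set X ⊆ [0,1]^d such that every open axis-parallel box in [0,1]^d of volume greater than r intersects X. Then for every r ∈ (0, 1/4] and d ≥ 2, N(r,d) ≤ q^{q^2+2}(4 log q + 1) log d, where q = ⌈1/r⌉. -/
section helpers

lemma greedy_cover {α β : Type*} [Fintype α] [DecidableEq α]
    (R : α → β → Prop) [∀ a b, Decidable (R a b)]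
    (T : Finset β) (c M : ℕ) (hM : (Finset.univ : Finset α).card = M) (hM0 : 0 < M)
    (hcM : c ≤ M)
    (hc : ∀ t ∈ T, (Finset.univ.filter (fun a => R a t)).card = c) :
    ∀ N : ℕ, ∃ F : Finset α, F.card ≤ N ∧
      ((T.filter (fun t => ∀ f ∈ F, ¬ R f t)).card : ℝ)
        ≤ (T.card : ℝ) * (1 - (c:ℝ)/M)^N := by
  intro N
  induction N with
  | zero => exact ⟨∅, by simp⟩
  | succ n ih =>
    obtain ⟨F, hF, hU⟩ := ih
    set U := T.filter (fun t => ∀ f ∈ F, ¬ R f t) with hUdef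
    have hUT : U ⊆ T := Finset.filter_subset _ _
    -- sum counting
    have hsum : ∑ a : α, (U.filter (fun t => R a t)).card = U.card * c := by
      have : ∀ a : α, (U.filter (fun t => R a t)).card = ∑ t ∈ U, if R a t then 1 else 0 := by
        intro a; rw [Finset.card_filter]
      simp_rw [this]
      rw [Finset.sum_comm]
      have : ∀ t ∈ U, (∑ a : α, if R a t then 1 else 0) = c := by
        intro t ht
        rw [← Finset.card_filter]
        exact hc t (hUT ht)
      rw [Finset.sum_congr rfl this, Finset.sum_const, smul_eq_mul]
    have huniv : (Finset.univ : Finset α).Nonempty := Finset.card_pos.mp (hM ▸ hM0)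
    have hex : ∃ a ∈ (Finset.univ : Finset α), U.card * c ≤ (U.filter (fun t => R a t)).card * M := by
      apply Finset.exists_le_of_sum_le huniv
      calc ∑ _a : α, U.card * c = M * (U.card * c) := by rw [Finset.sum_const, hM, smul_eq_mul]
        _ = (∑ a : α, (U.filter (fun t => R a t)).card) * M := by rw [hsum]; ring
        _ ≤ ∑ a : α, (U.filter (fun t => R a t)).card * M := by rw [Finset.sum_mul]
    obtain ⟨a, -, ha⟩ := hex
    refine ⟨insert a F, le_trans (Finset.card_insert_le _ _) (by omega), ?_⟩
    have hstep : T.filter (fun t => ∀ f ∈ insert a F, ¬ R f t)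
        = U.filter (fun t => ¬ R a t) := by
      rw [hUdef, Finset.filter_filter]
      apply Finset.filter_congr
      intro t _
      simp only [Finset.mem_insert]
      constructor
      · intro h; exact ⟨fun f hf => h f (Or.inr hf), h a (Or.inl rfl)⟩
      · rintro ⟨h1, h2⟩ f (rfl | hf)
        · exact h2
        · exact h1 f hf
    rw [hstep]
    have hMpos : (0:ℝ) < M := by exact_mod_cast hM0
    have hxle : (c:ℝ)/M ≤ 1 := by
      rw [div_le_one hMpos]; exact_mod_cast hcM
    have hcard : (U.filter (fun t => ¬ R a t)).card = U.card - (U.filter (fun t => R a t)).card := by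
      have := Finset.card_filter_add_card_filter_not (s := U) (p := fun t => R a t)
      omega
    have hcovle : (U.filter (fun t => R a t)).card ≤ U.card := Finset.card_le_card (Finset.filter_subset _ _)
    have hreal : ((U.filter (fun t => ¬ R a t)).card : ℝ) ≤ (U.card : ℝ) * (1 - (c:ℝ)/M) := by
      rw [hcard]
      have h1 : ((U.card - (U.filter (fun t => R a t)).card : ℕ) : ℝ)
          = (U.card : ℝ) - ((U.filter (fun t => R a t)).card : ℝ) := by
        push_cast [hcovle]; ring
      rw [h1]
      have h2 : (U.card : ℝ) * ((c:ℝ)/M) ≤ ((U.filter (fun t => R a t)).card : ℝ) := by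
        rw [mul_div_assoc', div_le_iff₀ hMpos]
        calc (U.card : ℝ) * c = ((U.card * c : ℕ) : ℝ) := by push_cast; ring
          _ ≤ (((U.filter (fun t => R a t)).card * M : ℕ) : ℝ) := by exact_mod_cast ha
          _ = ((U.filter (fun t => R a t)).card : ℝ) * M := by push_cast; ring
      nlinarith
    calc ((U.filter (fun t => ¬ R a t)).card : ℝ) ≤ (U.card : ℝ) * (1 - (c:ℝ)/M) := hreal
      _ ≤ ((T.card : ℝ) * (1 - (c:ℝ)/M)^n) * (1 - (c:ℝ)/M) := by
          apply mul_le_mul_of_nonneg_right hU (by linarith)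
      _ = (T.card : ℝ) * (1 - (c:ℝ)/M)^(n+1) := by ring

lemma count_matching {d s : ℕ} (S : Finset (Fin d)) (σ : Fin d → Fin s) :
    (Finset.univ.filter (fun a : Fin d → Fin s => ∀ i ∈ S, a i = σ i)).card
      = s ^ (d - S.card) := by
  have hset : Finset.univ.filter (fun a : Fin d → Fin s => ∀ i ∈ S, a i = σ i)
      = Fintype.piFinset (fun i => if i ∈ S then {σ i} else Finset.univ) := by
    ext a
    simp only [Finset.mem_filter, Finset.mem_univ, true_and, Fintype.mem_piFinset]
    constructor
    · intro h i
      by_cases hi : i ∈ S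
      · simp [hi, h i hi]
      · simp [hi]
    · intro h i hi
      have := h i
      simpa [hi] using this
  rw [hset, Fintype.card_piFinset]
  have : ∀ i : Fin d, ((if i ∈ S then ({σ i} : Finset (Fin s)) else Finset.univ).card)
      = if i ∈ Sᶜ then s else 1 := by
    intro i
    by_cases hi : i ∈ S <;> simp [hi, Finset.card_univ]
  rw [Finset.prod_congr rfl (fun i _ => this i), Finset.prod_ite_mem, Finset.univ_inter,
    Finset.prod_const, Finset.card_compl, Fintype.card_fin]

lemma grid_mem {q s : ℕ} (hq : 4 ≤ q) (hs : s + 1 = q) {a b : ℝ} (ha : 0 ≤ a) (hb : b ≤ 1)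
    (h : 1/(q:ℝ) < b - a) :
    ∃ j : Fin s, a < ((j:ℕ)+1)/(q:ℝ) ∧ ((j:ℕ)+1)/(q:ℝ) < b := by
  have hq0 : (0:ℝ) < q := by positivity
  have h' : 1 < (b - a) * q := (div_lt_iff₀ hq0).mp h
  set t := ⌊(q:ℝ)*a⌋₊ with ht
  have h1 : (t:ℝ) ≤ (q:ℝ)*a := Nat.floor_le (by positivity)
  have h2 : (q:ℝ)*a < t+1 := Nat.lt_floor_add_one _
  have hlt : a < ((t:ℝ)+1)/q := by rw [lt_div_iff₀ hq0]; nlinarith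
  have hub : ((t:ℝ)+1)/q < b := by rw [div_lt_iff₀ hq0]; nlinarith
  have htq : t + 1 < q := by
    have h3 : ((t:ℝ)+1)/q < 1 := lt_of_lt_of_le hub hb
    rw [div_lt_one hq0] at h3
    exact_mod_cast h3
  exact ⟨⟨t, by omega⟩, hlt, hub⟩

lemma grid_mem_wide {q s : ℕ} (hq : 4 ≤ q) (hs : s + 1 = q) {a b : ℝ} (ha : 0 ≤ a) (hb : b ≤ 1)
    (h : 1 - 1/(q:ℝ) < b - a) (j : Fin s) :
    a < ((j:ℕ)+1)/(q:ℝ) ∧ ((j:ℕ)+1)/(q:ℝ) < b := by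
  have hq0 : (0:ℝ) < q := by positivity
  have hj : ((j:ℕ):ℝ) + 1 ≤ (q:ℝ) - 1 := by
    have hj1 : (j:ℕ) + 1 ≤ q - 1 := by omega
    have : (((j:ℕ)+1:ℕ):ℝ) ≤ ((q-1:ℕ):ℝ) := by exact_mod_cast hj1
    push_cast [show 1 ≤ q by omega] at this
    linarith
  have hq1 : (1:ℝ) ≤ (q:ℝ) * (1 - 1/(q:ℝ)) := by
    rw [mul_sub, mul_one_div, div_self (ne_of_gt hq0)]
    have : (4:ℝ) ≤ (q:ℝ) := by exact_mod_cast hq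
    linarith
  constructor
  · rw [lt_div_iff₀ hq0]
    have ha1 : a < 1/(q:ℝ) := by linarith
    have h1q : (1/(q:ℝ))*q = 1 := by field_simp
    have hjn : (0:ℝ) ≤ ((j:ℕ):ℝ) := by positivity
    nlinarith [mul_lt_mul_of_pos_right ha1 hq0]
  · rw [div_lt_iff₀ hq0]
    have hb1 : 1 - 1/(q:ℝ) < b := by linarith
    have : ((q:ℝ) - 1) < b * q := by
      have := mul_lt_mul_of_pos_right hb1 hq0
      rw [sub_mul, one_mul, div_mul_cancel₀ 1 (ne_of_gt hq0)] at this
      linarith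
    linarith

end helpers

set_option maxHeartbeats 1000000


/-- `Ninv r d` is the minimum number of points in [0,1]^d needed to intersect
every open axis-parallel box in [0,1]^d of volume greater than r. -/
noncomputable def Ninv (r : ℝ) (d : ℕ) : ℕ :=
  sInf {n : ℕ | ∃ X : Finset (Fin d → ℝ), X.card = n ∧
    (∀ x ∈ X, ∀ i, x i ∈ Set.Icc (0:ℝ) 1) ∧
    ∀ a b : Fin d → ℝ, (∀ i, 0 ≤ a i ∧ a i ≤ b i ∧ b i ≤ 1) →
      r < ∏ i, (b i - a i) → ∃ x ∈ X, ∀ i, x i ∈ Set.Ioo (a i) (b i)}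

/-- For r ∈ (0,1/4] and d ≥ 2, N(r,d) ≤ q^(q²+2)(4 log q + 1) log d,
where q = ⌈1/r⌉. -/
theorem Ninv_upper_bound (r : ℝ) (hr : r ∈ Set.Ioc (0:ℝ) (1/4)) (d : ℕ)
    (hd : 2 ≤ d) (q : ℕ) (hq : q = ⌈1/r⌉₊) :
    (Ninv r d : ℝ) ≤ (q:ℝ)^(q^2+2) * (4 * Real.log q + 1) * Real.log d := by
  obtain ⟨hr0, hr14⟩ := hr
  -- basic facts about q
  have hq4 : 4 ≤ q := by
    have h4 : (4:ℝ) ≤ 1/r := by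
      rw [le_div_iff₀ hr0]; linarith
    have : (4:ℕ) = ⌈(4:ℝ)⌉₊ := by norm_num
    rw [hq, this]
    exact Nat.ceil_le_ceil h4
  have hq0R : (0:ℝ) < q := by positivity
  have hrq : 1/(q:ℝ) ≤ r := by
    rw [div_le_iff₀ hq0R, ← div_le_iff₀' hr0]
    rw [hq]; exact Nat.le_ceil _
  set s := q - 1 with hs_def
  have hs1 : s + 1 = q := by omega
  have hs0 : 0 < s := by omega
  have hs3 : 3 ≤ s := by omega
  have hsR : (0:ℝ) < s := by positivity
  set K := ⌈(q:ℝ) * Real.log q⌉₊ with hK_def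
  set k := min d K with hk_def
  have hkd : k ≤ d := min_le_left _ _
  let z : Fin s := ⟨0, hs0⟩
  -- the pattern set T
  set T : Finset (Finset (Fin d) × (Fin d → Fin s)) :=
    Finset.univ.filter (fun t => t.1.card = k ∧ ∀ i, i ∉ t.1 → t.2 i = z) with hT_def
  have hM : (Finset.univ : Finset (Fin d → Fin s)).card = s ^ d := by
    rw [Finset.card_univ, Fintype.card_fun, Fintype.card_fin, Fintype.card_fin]
  have hc : ∀ t ∈ T, (Finset.univ.filter
      (fun f : Fin d → Fin s => ∀ i ∈ t.1, f i = t.2 i)).card = s ^ (d - k) := by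
    intro t ht
    rw [hT_def, Finset.mem_filter] at ht
    rw [count_matching t.1 t.2, ht.2.1]
  set N := ⌈(s:ℝ)^k * ((k:ℝ) * (Real.log d + Real.log s))⌉₊ + 1 with hN_def
  obtain ⟨F, hFcard, hFbound⟩ :=
    greedy_cover (fun (f : Fin d → Fin s) t => ∀ i ∈ t.1, f i = t.2 i) T
      (s^(d-k)) (s^d) hM (by positivity) (Nat.pow_le_pow_right hs0 (by omega)) hc N
  -- bound on T.card
  have hTcard : T.card ≤ d.choose k * s ^ k := by
    have hsub : T ⊆ (Finset.powersetCard k Finset.univ).biUnion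
        (fun S => ({S} : Finset (Finset (Fin d))) ×ˢ
          Fintype.piFinset (fun i => if i ∈ S then (Finset.univ : Finset (Fin s)) else {z})) := by
      intro t ht
      rw [hT_def, Finset.mem_filter] at ht
      obtain ⟨-, h1, h2⟩ := ht
      rw [Finset.mem_biUnion]
      refine ⟨t.1, ?_, ?_⟩
      · rw [Finset.mem_powersetCard]; exact ⟨Finset.subset_univ _, h1⟩
      · rw [Finset.mem_product]
        refine ⟨Finset.mem_singleton_self _, ?_⟩
        rw [Fintype.mem_piFinset]
        intro i
        by_cases hi : i ∈ t.1 <;> simp [hi, h2 i]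
    calc T.card ≤ _ := Finset.card_le_card hsub
      _ ≤ ∑ S ∈ Finset.powersetCard k Finset.univ, (({S} : Finset (Finset (Fin d))) ×ˢ
          Fintype.piFinset (fun i => if i ∈ S then (Finset.univ : Finset (Fin s)) else {z})).card :=
        Finset.card_biUnion_le
      _ ≤ ∑ _S ∈ Finset.powersetCard k Finset.univ, s ^ k := by
        apply Finset.sum_le_sum
        intro S hS
        rw [Finset.mem_powersetCard] at hS
        rw [Finset.card_product, Finset.card_singleton, one_mul, Fintype.card_piFinset]
        have : ∀ i : Fin d, ((if i ∈ S then (Finset.univ : Finset (Fin s)) else {z}).card)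
            = if i ∈ S then s else 1 := by
          intro i; by_cases hi : i ∈ S <;> simp [hi, Finset.card_univ]
        rw [Finset.prod_congr rfl (fun i _ => this i), Finset.prod_ite_mem, Finset.univ_inter,
          Finset.prod_const, hS.2]
      _ = d.choose k * s ^ k := by
        rw [Finset.sum_const, smul_eq_mul, Finset.card_powersetCard, Finset.card_univ,
          Fintype.card_fin]
  -- the key smallness estimate
  have hd1R : (1:ℝ) ≤ d := by exact_mod_cast (by omega : 1 ≤ d)
  have hlogd : 0 ≤ Real.log d := Real.log_nonneg hd1R
  have hlogs : 0 ≤ Real.log s := Real.log_nonneg (by exact_mod_cast hs0)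
  have hlt1 : (T.card : ℝ) * (1 - (s^(d-k) : ℕ)/((s^d : ℕ):ℝ))^N < 1 := by
    have hx_eq : ((s^(d-k) : ℕ):ℝ)/((s^d : ℕ):ℝ) = 1/(s:ℝ)^k := by
      push_cast
      have hsplit : (s:ℝ)^d = (s:ℝ)^(d-k) * (s:ℝ)^k := by
        rw [← pow_add]; congr 1; omega
      rw [hsplit, div_mul_eq_div_div, div_self (by positivity)]
    rw [hx_eq]
    set x := 1/(s:ℝ)^k with hx_def
    have hx0 : 0 < x := by positivity
    have hx1 : x ≤ 1 := by
      rw [hx_def, div_le_one (by positivity)]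
      exact one_le_pow₀ (by exact_mod_cast hs0)
    have hexp : (1 - x)^N ≤ Real.exp (-((N:ℝ)*x)) := by
      calc (1 - x)^N ≤ (Real.exp (-x))^N := by
            apply pow_le_pow_left₀ (by linarith)
            linarith [Real.add_one_le_exp (-x)]
        _ = Real.exp (-((N:ℝ)*x)) := by
            rw [← Real.exp_nat_mul]; ring_nf
    have hTR : (T.card : ℝ) ≤ (d:ℝ)^k * (s:ℝ)^k := by
      calc (T.card : ℝ) ≤ ((d.choose k * s ^ k : ℕ) : ℝ) := by exact_mod_cast hTcard
        _ ≤ (((d^k * s ^ k : ℕ)) : ℝ) := by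
            exact_mod_cast Nat.mul_le_mul_right _ (Nat.choose_le_pow d k)
        _ = (d:ℝ)^k * (s:ℝ)^k := by push_cast; ring
    have hkey : (d:ℝ)^k * (s:ℝ)^k < Real.exp ((N:ℝ)*x) := by
      rw [show (d:ℝ)^k*(s:ℝ)^k = Real.exp (Real.log ((d:ℝ)^k*(s:ℝ)^k)) from
        (Real.exp_log (by positivity)).symm]
      apply Real.exp_lt_exp.mpr
      have hlogeq : Real.log ((d:ℝ)^k*(s:ℝ)^k) = (k:ℝ)*Real.log d + (k:ℝ)*Real.log s := by
        rw [Real.log_mul (by positivity) (by positivity), Real.log_pow, Real.log_pow]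
      rw [hlogeq]
      have hA : (s:ℝ)^k * ((k:ℝ)*(Real.log d + Real.log s)) ≤ ((N:ℕ):ℝ) - 1 := by
        have h1 := Nat.le_ceil ((s:ℝ)^k * ((k:ℝ)*(Real.log d + Real.log s)))
        have h2 : ((⌈(s:ℝ)^k * ((k:ℝ)*(Real.log d + Real.log s))⌉₊ : ℕ):ℝ) + 1 = (N:ℝ) := by
          rw [hN_def]; push_cast; ring
        linarith
      have hsk : (0:ℝ) < (s:ℝ)^k := by positivity
      have hNx : (N:ℝ) * x = (N:ℝ)/(s:ℝ)^k := by rw [hx_def]; ring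
      rw [hNx, lt_div_iff₀ hsk]
      nlinarith
    have hexp_pos : (0:ℝ) < Real.exp ((N:ℝ)*x) := Real.exp_pos _
    calc (T.card : ℝ) * (1 - x)^N ≤ ((d:ℝ)^k * (s:ℝ)^k) * Real.exp (-((N:ℝ)*x)) := by
          apply mul_le_mul hTR hexp (pow_nonneg (by linarith) N) (by positivity)
      _ < 1 := by
          rw [Real.exp_neg, ← div_eq_mul_inv, div_lt_one hexp_pos]
          exact hkey
  -- covering property
  have hcover : ∀ t ∈ T, ∃ f ∈ F, ∀ i ∈ t.1, f i = t.2 i := by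
    have hzero : (T.filter (fun t => ∀ f ∈ F, ¬ ∀ i ∈ t.1, f i = t.2 i)).card = 0 := by
      have hlt : ((T.filter (fun t => ∀ f ∈ F, ¬ ∀ i ∈ t.1, f i = t.2 i)).card : ℝ) < 1 :=
        lt_of_le_of_lt hFbound hlt1
      exact_mod_cast Nat.lt_one_iff.mp (by exact_mod_cast hlt)
    rw [Finset.card_eq_zero] at hzero
    intro t ht
    by_contra hcon
    push_neg at hcon
    have : t ∈ T.filter (fun t => ∀ f ∈ F, ¬ ∀ i ∈ t.1, f i = t.2 i) := by
      rw [Finset.mem_filter]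
      refine ⟨ht, fun f hf hall => ?_⟩
      obtain ⟨i, hi, hne⟩ := hcon f hf
      exact hne (hall i hi)
    rw [hzero] at this
    exact absurd this (Finset.notMem_empty t)
  -- the point set
  set val : Fin s → ℝ := fun j => ((j:ℕ)+1)/(q:ℝ) with hval_def
  set X : Finset (Fin d → ℝ) := F.image (fun f => fun i => val (f i)) with hX_def
  have hval01 : ∀ j : Fin s, val j ∈ Set.Icc (0:ℝ) 1 := by
    intro j
    constructor
    · positivity
    · rw [hval_def]
      simp only
      rw [div_le_one hq0R]
      have : (j:ℕ) + 1 ≤ q := by omega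
      exact_mod_cast this
  have hXIcc : ∀ x ∈ X, ∀ i, x i ∈ Set.Icc (0:ℝ) 1 := by
    intro x hx i
    rw [hX_def, Finset.mem_image] at hx
    obtain ⟨f, -, rfl⟩ := hx
    exact hval01 (f i)
  -- the hitting property
  have hXhit : ∀ a b : Fin d → ℝ, (∀ i, 0 ≤ a i ∧ a i ≤ b i ∧ b i ≤ 1) →
      r < ∏ i, (b i - a i) → ∃ x ∈ X, ∀ i, x i ∈ Set.Ioo (a i) (b i) := by
    intro a b hab hvol
    have hONE : ∀ j, 0 ≤ b j - a j ∧ b j - a j ≤ 1 := fun j =>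
      ⟨by linarith [(hab j).1, (hab j).2.1, (hab j).2.2],
       by linarith [(hab j).1, (hab j).2.2]⟩
    have hbapos : ∀ i, 1/(q:ℝ) < b i - a i := by
      intro i
      have hprodle : ∏ j, (b j - a j) ≤ b i - a i := by
        rw [← Finset.mul_prod_erase Finset.univ _ (Finset.mem_univ i)]
        have hle1 : ∏ j ∈ Finset.univ.erase i, (b j - a j) ≤ 1 :=
          Finset.prod_le_one (fun j _ => (hONE j).1) (fun j _ => (hONE j).2)
        have hge0 : 0 ≤ ∏ j ∈ Finset.univ.erase i, (b j - a j) :=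
          Finset.prod_nonneg (fun j _ => (hONE j).1)
        nlinarith [(hONE i).1]
      linarith [hrq, hvol]
    choose σ hσ using fun i => grid_mem hq4 hs1 (hab i).1 (hab i).2.2 (hbapos i)
    obtain ⟨Nar, hNar_def⟩ : ∃ Nar : Finset (Fin d),
        Nar = Finset.univ.filter (fun i => b i - a i ≤ 1 - 1/(q:ℝ)) := ⟨_, rfl⟩
    have hNarcard : (Nar.card:ℝ) < (q:ℝ) * Real.log q := by
      have hq14 : 1/(q:ℝ) ≤ 1/4 := by
        rw [div_le_div_iff₀ hq0R (by norm_num)]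
        have : (4:ℝ) ≤ q := by exact_mod_cast hq4
        linarith
      have h1q : (0:ℝ) < 1 - 1/(q:ℝ) := by linarith
      have hp1 : 1/(q:ℝ) < (1 - 1/(q:ℝ))^Nar.card := by
        calc 1/(q:ℝ) ≤ r := hrq
          _ < ∏ j, (b j - a j) := hvol
          _ ≤ ∏ j ∈ Nar, (b j - a j) := by
              rw [← Finset.prod_sdiff (Finset.subset_univ Nar)]
              have h1 : ∏ j ∈ Finset.univ \ Nar, (b j - a j) ≤ 1 :=
                Finset.prod_le_one (fun j _ => (hONE j).1) (fun j _ => (hONE j).2)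
              have h2 : 0 ≤ ∏ j ∈ Nar, (b j - a j) :=
                Finset.prod_nonneg (fun j _ => (hONE j).1)
              nlinarith
          _ ≤ ∏ _j ∈ Nar, (1 - 1/(q:ℝ)) := by
              apply Finset.prod_le_prod (fun j _ => (hONE j).1)
              intro j hj
              rw [hNar_def] at hj
              exact (Finset.mem_filter.mp hj).2
          _ = (1 - 1/(q:ℝ))^Nar.card := Finset.prod_const _
      have hlog1 : Real.log (1/(q:ℝ)) < (Nar.card:ℝ) * Real.log (1 - 1/(q:ℝ)) := by
        have := Real.log_lt_log (by positivity) hp1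
        rwa [Real.log_pow] at this
      have hlog2 : Real.log (1 - 1/(q:ℝ)) ≤ -(1/(q:ℝ)) := by
        have := Real.log_le_sub_one_of_pos h1q
        linarith
      have hlogq : Real.log (1/(q:ℝ)) = - Real.log q := by
        rw [one_div, Real.log_inv]
      have hmn : (0:ℝ) ≤ (Nar.card:ℝ) := Nat.cast_nonneg _
      have h3 : (Nar.card:ℝ) * (1/(q:ℝ)) < Real.log q := by
        nlinarith [mul_le_mul_of_nonneg_left hlog2 hmn]
      calc (Nar.card:ℝ) = ((Nar.card:ℝ) * (1/(q:ℝ))) * q := by field_simp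
        _ < Real.log q * q := by
            apply mul_lt_mul_of_pos_right h3 hq0R
        _ = (q:ℝ) * Real.log q := mul_comm _ _
    have hm_le_k : Nar.card ≤ k := by
      have h1 : Nar.card ≤ d := by
        calc Nar.card ≤ (Finset.univ : Finset (Fin d)).card := Finset.card_le_card (Finset.subset_univ _)
          _ = d := by rw [Finset.card_univ, Fintype.card_fin]
      have h2 : Nar.card < K := by
        have hcast : (Nar.card:ℝ) < (K:ℝ) := lt_of_lt_of_le hNarcard (Nat.le_ceil _)
        exact_mod_cast hcast
      exact le_min h1 (le_of_lt h2)
    obtain ⟨S, hNS, hScard⟩ := Finset.exists_superset_card_eq hm_le_k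
      (by rw [Fintype.card_fin]; exact hkd)
    set σ' : Fin d → Fin s := fun i => if i ∈ S then σ i else z with hσ'_def
    have htT : (S, σ') ∈ T := by
      rw [hT_def, Finset.mem_filter]
      refine ⟨Finset.mem_univ _, hScard, fun i hi => ?_⟩
      simp only [hσ'_def, if_neg hi]
    obtain ⟨f, hfF, hf⟩ := hcover (S, σ') htT
    refine ⟨(fun i => val (f i)), Finset.mem_image_of_mem _ hfF, ?_⟩
    intro i
    by_cases hiN : i ∈ Nar
    · have hiS : i ∈ S := hNS hiN
      have hfi : f i = σ i := by
        have := hf i hiS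
        simpa only [hσ'_def, if_pos hiS] using this
      have hmem : val (f i) ∈ Set.Ioo (a i) (b i) := by
        rw [Set.mem_Ioo, hfi]; exact hσ i
      simpa using hmem
    · have hwide : 1 - 1/(q:ℝ) < b i - a i := by
        rw [hNar_def] at hiN
        simp only [Finset.mem_filter, Finset.mem_univ, true_and, not_le] at hiN
        exact hiN
      have hmem : val (f i) ∈ Set.Ioo (a i) (b i) :=
        Set.mem_Ioo.mpr (grid_mem_wide hq4 hs1 (hab i).1 (hab i).2.2 hwide (f i))
      simpa using hmem
  -- Ninv bound
  have hNinv : Ninv r d ≤ X.card := Nat.sInf_le ⟨X, rfl, hXIcc, hXhit⟩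
  have hXN : X.card ≤ N := le_trans (Finset.card_image_le) hFcard
  -- final arithmetic
  have hchain : (Ninv r d : ℝ) ≤ (N:ℝ) := by exact_mod_cast le_trans hNinv hXN
  refine le_trans hchain ?_
  -- numeric facts
  have hL1 : (1:ℝ) ≤ Real.log q := by
    rw [Real.le_log_iff_exp_le hq0R]
    have h1 : Real.exp 1 < 2.7182818286 := Real.exp_one_lt_d9
    have h2 : (4:ℝ) ≤ q := by exact_mod_cast hq4
    linarith
  have hLd2 : (1/2:ℝ) ≤ Real.log d := by
    have h1 : (0.6931471803:ℝ) < Real.log 2 := Real.log_two_gt_d9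
    have h2 : Real.log 2 ≤ Real.log d := by
      apply Real.log_le_log (by norm_num)
      exact_mod_cast hd
    linarith
  have hKq2 : K ≤ q^2 := by
    rw [hK_def]
    apply Nat.ceil_le.mpr
    have hlq : Real.log q ≤ (q:ℝ) - 1 := by
      have := Real.log_le_sub_one_of_pos hq0R
      linarith
    have : (q:ℝ) * Real.log q ≤ (q:ℝ) * (q:ℝ) := by nlinarith
    calc (q:ℝ) * Real.log q ≤ (q:ℝ) * (q:ℝ) := this
      _ = ((q^2:ℕ):ℝ) := by push_cast; ring
  have hkq2 : k ≤ q^2 := le_trans (min_le_right _ _) hKq2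
  -- bound N
  have hA_nonneg : (0:ℝ) ≤ (s:ℝ)^k * ((k:ℝ) * (Real.log d + Real.log s)) := by positivity
  have hNA : (N:ℝ) ≤ (s:ℝ)^k * ((k:ℝ) * (Real.log d + Real.log s)) + 2 := by
    have h1 := Nat.ceil_lt_add_one hA_nonneg
    rw [hN_def]
    push_cast
    linarith
  have hsq : (s:ℝ) ≤ (q:ℝ) := by exact_mod_cast (by omega : s ≤ q)
  have hq1R : (1:ℝ) ≤ (q:ℝ) := by exact_mod_cast (by omega : 1 ≤ q)
  have hsk_le : (s:ℝ)^k ≤ (q:ℝ)^(q^2) :=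
    le_trans (pow_le_pow_left₀ hsR.le hsq k) (pow_le_pow_right₀ hq1R hkq2)
  have hkR : (k:ℝ) ≤ (q:ℝ)^2 := by
    have : ((k:ℕ):ℝ) ≤ ((q^2:ℕ):ℝ) := by exact_mod_cast hkq2
    push_cast at this
    linarith
  have hlogsq : Real.log s ≤ Real.log q := Real.log_le_log hsR (by exact_mod_cast (by omega : s ≤ q))
  have hAbound : (s:ℝ)^k * ((k:ℝ) * (Real.log d + Real.log s))
      ≤ (q:ℝ)^(q^2) * ((q:ℝ)^2 * (Real.log d + Real.log q)) := by
    apply mul_le_mul hsk_le ?_ (by positivity) (by positivity)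
    apply mul_le_mul hkR ?_ (by positivity) (by positivity)
    linarith
  -- final inequality
  set L := Real.log q with hL_def
  set Ld := Real.log d with hLd_def
  set P := (q:ℝ)^(q^2) * (q:ℝ)^2 with hP_def
  have hP16 : (16:ℝ) ≤ P := by
    rw [hP_def]
    have h1 : (1:ℝ) ≤ (q:ℝ)^(q^2) := one_le_pow₀ hq1R
    have h2 : (16:ℝ) ≤ (q:ℝ)^2 := by nlinarith [show (4:ℝ) ≤ (q:ℝ) by exact_mod_cast hq4]
    nlinarith
  have hRHS : (q:ℝ)^(q^2+2) * (4 * Real.log q + 1) * Real.log d = P * (4*L+1) * Ld := by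
    rw [hP_def, hL_def, hLd_def, pow_add]
  rw [hRHS]
  have hgoal : P * (Ld + L) + 2 ≤ P * (4*L+1) * Ld := by
    have hPL : (16:ℝ) ≤ P * L := by nlinarith
    nlinarith [mul_le_mul_of_nonneg_left hLd2 (le_trans (by norm_num) hPL)]
  calc (N:ℝ) ≤ (s:ℝ)^k * ((k:ℝ) * (Real.log d + Real.log s)) + 2 := hNA
    _ ≤ (q:ℝ)^(q^2) * ((q:ℝ)^2 * (Ld + L)) + 2 := by
        rw [hLd_def, hL_def]; linarith [hAbound]
    _ = P * (Ld + L) + 2 := by rw [hP_def]; ring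
    _ ≤ P * (4*L+1) * Ld := hgoal
end
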